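/- Let d ≥ 1 be fixed and (p_n) a sequence of integers with p_n ≥ d + 1 and m_n := min{n, p_n} → ∞. For each n let λ̂_1(n) ≥ λ̂_2(n) ≥ ... ≥ λ̂_{p_n}(n) ≥ 0 be real numbers such that λ̂_d(n) ≥ κ for all n, for some κ > 0, and λ̂_j(n) ≤ K/m_n for all j > d and all n, for some constant K. Let c(n) > 0 with c(n) → 0 and c(n)·m_n → ∞, and define ŝ_j(n) = λ̂_j(n)/(1 + λ̂_j(n)) and ŝ*_j(n) = (ŝ_j(n) + c(n))/(ŝ_{j+1}(n) + c(n)) − 1. Then: (i) ŝ*_d(n) → +∞ as n → ∞; and (ii) there is a constant K' such that 0 ≤ ŝ*_j(n) ≤ K'/(c(n)·m_n) for all d < j ≤ p_n − 1 and all n, so that sup_{d < j ≤ p_n − 1} ŝ*_j(n) → 0. -/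
import Mathlib


open Filter

/-- `ŝ_j = λ̂_j / (1 + λ̂_j)`. -/
noncomputable def sHat (lam : ℕ → ℝ) (j : ℕ) : ℝ := lam j / (1 + lam j)

/-- Factor-model first-round ridge ratio `ŝ*_j = (ŝ_j + c)/(ŝ_{j+1} + c) − 1`
(first powers rather than squares). -/
noncomputable def sStarF (lam : ℕ → ℝ) (c : ℝ) (j : ℕ) : ℝ :=
  (sHat lam j + c) / (sHat lam (j + 1) + c) - 1

lemma sHat_nonneg' {lam : ℕ → ℝ} {j : ℕ} (h : 0 ≤ lam j) : 0 ≤ sHat lam j :=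
  div_nonneg h (by linarith)

lemma sHat_le_lam {lam : ℕ → ℝ} {j : ℕ} (h : 0 ≤ lam j) : sHat lam j ≤ lam j :=
  div_le_self h (by linarith)

lemma sHat_mono {lam : ℕ → ℝ} {i j : ℕ} (hi : 0 ≤ lam i) (hij : lam i ≤ lam j) :
    sHat lam i ≤ sHat lam j := by
  unfold sHat
  rw [div_le_div_iff₀ (by linarith) (by linarith)]
  nlinarith

lemma sHat_lb {lam : ℕ → ℝ} {j : ℕ} {κ : ℝ} (hκ : 0 < κ) (h : κ ≤ lam j) :
    κ / (1 + κ) ≤ sHat lam j := by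
  unfold sHat
  rw [div_le_div_iff₀ (by linarith) (by linarith)]
  nlinarith

set_option maxHeartbeats 1000000 in
/-- First-round ridge ratios in the factor-model setting: with `m_n = min{n, p_n} → ∞`,
sorted eigenvalues `λ̂_1(n) ≥ ... ≥ λ̂_{p_n}(n) ≥ 0`, `λ̂_d(n) ≥ κ > 0` and
`λ̂_j(n) ≤ K/m_n` for `j > d`, and a ridge `c(n) → 0` with `c(n)·m_n → ∞`:
(i) `ŝ*_d(n) → +∞`;
(ii) there is a constant `K'` with `0 ≤ ŝ*_j(n) ≤ K'/(c(n)·m_n)` for all `d < j ≤ p_n − 1`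
and all `n ≥ 1`, so that (iii) `sup_{d < j ≤ p_n − 1} ŝ*_j(n) → 0`. -/
theorem sStarF_limits_factor (d : ℕ) (hd : 1 ≤ d)
    (p : ℕ → ℕ) (hp : ∀ n, d + 1 ≤ p n)
    (hm : Tendsto (fun n => min n (p n)) atTop atTop)
    (lamhat : ℕ → ℕ → ℝ)
    (hsorted : ∀ n i j, 1 ≤ i → i ≤ j → j ≤ p n → lamhat n j ≤ lamhat n i)
    (hnn : ∀ n j, 1 ≤ j → j ≤ p n → 0 ≤ lamhat n j)
    (κ : ℝ) (hκ : 0 < κ) (hsignal : ∀ n, κ ≤ lamhat n d)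
    (K : ℝ)
    (htail : ∀ n, 1 ≤ n → ∀ j, d < j → j ≤ p n →
      lamhat n j ≤ K / (min n (p n) : ℝ))
    (c : ℕ → ℝ) (hcpos : ∀ n, 0 < c n)
    (hc : Tendsto c atTop (nhds 0))
    (hcm : Tendsto (fun n => c n * (min n (p n) : ℝ)) atTop atTop) :
    Tendsto (fun n => sStarF (lamhat n) (c n) d) atTop atTop ∧
    (∃ K' : ℝ, 0 ≤ K' ∧ ∀ n, 1 ≤ n → ∀ j, d < j → j ≤ p n - 1 →
      0 ≤ sStarF (lamhat n) (c n) j ∧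
      sStarF (lamhat n) (c n) j ≤ K' / (c n * (min n (p n) : ℝ))) ∧
    (∀ ε : ℝ, 0 < ε → ∃ N, ∀ n, N ≤ n → ∀ j, d < j → j ≤ p n - 1 →
      sStarF (lamhat n) (c n) j < ε) := by
  -- replace real min of casts by cast of nat min
  simp only [← Nat.cast_min] at htail hcm ⊢
  obtain ⟨a, ha, ha_pos⟩ : ∃ a : ℝ, a = κ / (1 + κ) ∧ 0 < a :=
    ⟨_, rfl, div_pos hκ (by linarith)⟩
  have hmR : Tendsto (fun n => ((min n (p n) : ℕ) : ℝ)) atTop atTop :=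
    tendsto_natCast_atTop_atTop.comp hm
  -- K is nonnegative
  have hK0 : 0 ≤ K := by
    have h1 := htail 1 le_rfl (d + 1) (Nat.lt_succ_self d) (hp 1)
    have h2 := hnn 1 (d + 1) (by omega) (hp 1)
    have hm1 : min 1 (p 1) = 1 := by have := hp 1; omega
    rw [hm1] at h1
    simp at h1
    linarith
  -- Part (ii)
  have hpart2 : ∀ n, 1 ≤ n → ∀ j, d < j → j ≤ p n - 1 →
      0 ≤ sStarF (lamhat n) (c n) j ∧
      sStarF (lamhat n) (c n) j ≤ K / (c n * ((min n (p n) : ℕ) : ℝ)) := by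
    intro n hn j hdj hjp
    have hpn := hp n
    have hj1 : j + 1 ≤ p n := by omega
    have hjle : j ≤ p n := by omega
    have h1j : 1 ≤ j := by omega
    have hm1 : (1 : ℕ) ≤ min n (p n) := by omega
    have hmpos : (0 : ℝ) < ((min n (p n) : ℕ) : ℝ) := by exact_mod_cast hm1
    have hLj : 0 ≤ lamhat n j := hnn n j h1j hjle
    have hLj1 : 0 ≤ lamhat n (j + 1) := hnn n (j + 1) (by omega) hj1
    have hord : lamhat n (j + 1) ≤ lamhat n j := hsorted n j (j + 1) h1j (Nat.le_succ j) hj1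
    have hsj1 : 0 ≤ sHat (lamhat n) (j + 1) := sHat_nonneg' hLj1
    have hsle : sHat (lamhat n) (j + 1) ≤ sHat (lamhat n) j := sHat_mono hLj1 hord
    have hcn := hcpos n
    have hD : 0 < sHat (lamhat n) (j + 1) + c n := by linarith
    have hsj_ub : sHat (lamhat n) j ≤ K / ((min n (p n) : ℕ) : ℝ) :=
      le_trans (sHat_le_lam hLj) (htail n hn j hdj hjle)
    have hsj0 : 0 ≤ sHat (lamhat n) j := sHat_nonneg' hLj
    constructor
    · have h1 : (1 : ℝ) ≤ (sHat (lamhat n) j + c n) / (sHat (lamhat n) (j + 1) + c n) :=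
        (one_le_div hD).mpr (by linarith)
      unfold sStarF; linarith
    · have heq : sStarF (lamhat n) (c n) j
          = (sHat (lamhat n) j - sHat (lamhat n) (j + 1)) / (sHat (lamhat n) (j + 1) + c n) := by
        unfold sStarF
        rw [div_sub_one hD.ne']
        ring_nf
      rw [heq]
      have h1 : (sHat (lamhat n) j - sHat (lamhat n) (j + 1)) / (sHat (lamhat n) (j + 1) + c n)
          ≤ sHat (lamhat n) j / c n :=
        div_le_div₀ hsj0 (by linarith) hcn (by linarith)
      have h2 : sHat (lamhat n) j / c n ≤ (K / ((min n (p n) : ℕ) : ℝ)) / c n :=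
        (div_le_div_iff_of_pos_right hcn).mpr hsj_ub
      have h3 : (K / ((min n (p n) : ℕ) : ℝ)) / c n = K / (c n * ((min n (p n) : ℕ) : ℝ)) := by
        rw [div_div, mul_comm]
      linarith
  -- Part (i)
  have hE : Tendsto (fun n => K / ((min n (p n) : ℕ) : ℝ) + c n) atTop (nhds 0) := by
    have h1 : Tendsto (fun n => K / ((min n (p n) : ℕ) : ℝ)) atTop (nhds 0) :=
      Tendsto.div_atTop tendsto_const_nhds hmR
    simpa using h1.add hc
  have hEpos : ∀ᶠ n in atTop, K / ((min n (p n) : ℕ) : ℝ) + c n ∈ Set.Ioi (0 : ℝ) := by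
    filter_upwards [eventually_ge_atTop 1] with n hn
    have hm1 : (1 : ℕ) ≤ min n (p n) := by have := hp n; omega
    have hmpos : (0 : ℝ) < ((min n (p n) : ℕ) : ℝ) := by exact_mod_cast hm1
    have : 0 ≤ K / ((min n (p n) : ℕ) : ℝ) := div_nonneg hK0 hmpos.le
    have := hcpos n
    simp only [Set.mem_Ioi]
    linarith
  have hE' : Tendsto (fun n => K / ((min n (p n) : ℕ) : ℝ) + c n) atTop (nhdsWithin 0 (Set.Ioi 0)) :=
    tendsto_nhdsWithin_iff.mpr ⟨hE, hEpos⟩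
  have hinv : Tendsto (fun n => (K / ((min n (p n) : ℕ) : ℝ) + c n)⁻¹) atTop atTop :=
    hE'.inv_tendsto_nhdsGT_zero
  have hg : Tendsto (fun n => a * (K / ((min n (p n) : ℕ) : ℝ) + c n)⁻¹ - 1) atTop atTop := by
    have := tendsto_atTop_add_const_right atTop (-1) (Tendsto.const_mul_atTop ha_pos hinv)
    simpa [sub_eq_add_neg] using this
  have hbound : ∀ᶠ n in atTop,
      a * (K / ((min n (p n) : ℕ) : ℝ) + c n)⁻¹ - 1 ≤ sStarF (lamhat n) (c n) d := by
    filter_upwards [eventually_ge_atTop 1] with n hn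
    have hpn := hp n
    have hLd1 : 0 ≤ lamhat n (d + 1) := hnn n (d + 1) (by omega) hpn
    have hsd1 : 0 ≤ sHat (lamhat n) (d + 1) := sHat_nonneg' hLd1
    have hsd_lb : a ≤ sHat (lamhat n) d := ha ▸ sHat_lb hκ (hsignal n)
    have hsd1_ub : sHat (lamhat n) (d + 1) ≤ K / ((min n (p n) : ℕ) : ℝ) :=
      le_trans (sHat_le_lam hLd1) (htail n hn (d + 1) (Nat.lt_succ_self d) hpn)
    have hcn := hcpos n
    have hD : 0 < sHat (lamhat n) (d + 1) + c n := by linarith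
    have hdiv : a / (K / ((min n (p n) : ℕ) : ℝ) + c n)
        ≤ (sHat (lamhat n) d + c n) / (sHat (lamhat n) (d + 1) + c n) :=
      div_le_div₀ (by linarith) (by linarith) hD (by linarith)
    rw [mul_comm, ← div_eq_inv_mul]
    unfold sStarF
    linarith
  refine ⟨tendsto_atTop_mono' atTop hbound hg, ⟨K, hK0, hpart2⟩, ?_⟩
  -- Part (iii)
  intro ε hε
  have hto : Tendsto (fun n => K / (c n * ((min n (p n) : ℕ) : ℝ))) atTop (nhds 0) :=
    Tendsto.div_atTop tendsto_const_nhds hcm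
  have hev : ∀ᶠ n in atTop, K / (c n * ((min n (p n) : ℕ) : ℝ)) < ε :=
    (tendsto_order.1 hto).2 ε hε
  obtain ⟨N, hN⟩ := (hev.and (eventually_ge_atTop 1)).exists_forall_of_atTop
  refine ⟨N, fun n hn j hdj hjp => ?_⟩
  obtain ⟨hlt, hn1⟩ := hN n hn
  exact lt_of_le_of_lt ((hpart2 n hn1 j hdj hjp).2) hlt
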